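/- Let A be an n×n complex matrix with k = Ind(A), B an n×p complex matrix, and m a positive integer. Then over all n×p matrices X with range(X) ⊆ range(A^k), the Frobenius norm ‖A^{m+1}X − A^m B‖_F is uniquely minimized at X = A^{Ⓦ_m}·B, where A^{Ⓦ_m} = (A^⊕)^{m+1}·A^m is the m-weak group inverse of A. -/

import Mathlib

open Matrix

/-- Index of a square matrix: least `d` with `rank (B^d) = rank (B^(d+1))`. -/
noncomputable def matInd {ι : Type*} [Fintype ι] [DecidableEq ι] (B : Matrix ι ι ℂ) : ℕ :=
  sInf {d : ℕ | (B ^ d).rank = (B ^ (d + 1)).rank}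

/-- `X` is the Moore-Penrose inverse of `A` (four Penrose equations). -/
noncomputable def IsMP {ι κ : Type*} [Fintype ι] [Fintype κ] (A : Matrix ι κ ℂ) (X : Matrix κ ι ℂ) : Prop :=
  A * X * A = A ∧ X * A * X = X ∧ (A * X)ᴴ = A * X ∧ (X * A)ᴴ = X * A

/-- Column space (range) of a matrix. -/
noncomputable def mrange {ι κ : Type*} [Fintype κ] (M : Matrix ι κ ℂ) : Submodule ℂ (ι → ℂ) :=
  LinearMap.range M.mulVecLin

/-- Null space of a matrix. -/
noncomputable def mker {ι κ : Type*} [Fintype κ] (M : Matrix ι κ ℂ) : Submodule ℂ (κ → ℂ) :=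
  LinearMap.ker M.mulVecLin

/-- `X` is the core-EP inverse of `B`. -/
noncomputable def IsCoreEP {ι : Type*} [Fintype ι] [DecidableEq ι] (B X : Matrix ι ι ℂ) : Prop :=
  X * B * X = X ∧ mrange X = mrange (B ^ matInd B) ∧ mrange Xᴴ = mrange (B ^ matInd B)

/-- `X` is the Drazin inverse of `B`. -/
noncomputable def IsDrazin {ι : Type*} [Fintype ι] [DecidableEq ι] (B X : Matrix ι ι ℂ) : Prop :=
  X * B * X = X ∧ B * X = X * B ∧ B ^ (matInd B + 1) * X = B ^ matInd B

/-- `X` is the group inverse of `B`. -/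
noncomputable def IsGroupInv {ι : Type*} [Fintype ι] (B X : Matrix ι ι ℂ) : Prop :=
  B * X * B = B ∧ X * B * X = X ∧ B * X = X * B

/-- Frobenius norm of a matrix. -/
noncomputable def frobNorm {ι κ : Type*} [Fintype ι] [Fintype κ] (M : Matrix ι κ ℂ) : ℝ :=
  Real.sqrt (∑ i, ∑ j, ‖M i j‖ ^ 2)

section Aux
set_option linter.unusedSectionVars false

variable {ι κ μ : Type*} [Fintype ι] [Fintype κ] [Fintype μ]

lemma mrange_mul (M : Matrix ι κ ℂ) (N : Matrix κ μ ℂ) :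
    mrange (M * N) = (mrange N).map M.mulVecLin := by
  rw [mrange, mrange, Matrix.mulVecLin_mul, LinearMap.range_comp]

lemma mrange_mul_le (M : Matrix ι κ ℂ) (N : Matrix κ μ ℂ) :
    mrange (M * N) ≤ mrange M := by
  rw [mrange_mul, mrange]
  exact LinearMap.map_le_range

lemma mem_mrange {M : Matrix ι κ ℂ} {u : ι → ℂ} :
    u ∈ mrange M ↔ ∃ v, M *ᵥ v = u := by
  simp [mrange, LinearMap.mem_range, Matrix.mulVecLin_apply]

lemma finrank_mrange (M : Matrix ι κ ℂ) : Module.finrank ℂ (mrange M) = M.rank := rfl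

variable {nn : ℕ} (A : Matrix (Fin nn) (Fin nn) ℂ)

lemma matInd_spec : (A ^ matInd A).rank = (A ^ (matInd A + 1)).rank := by
  have hne : {d : ℕ | (A ^ d).rank = (A ^ (d + 1)).rank}.Nonempty := by
    by_contra h
    rw [Set.not_nonempty_iff_eq_empty, Set.eq_empty_iff_forall_notMem] at h
    have hlt : ∀ d, (A ^ (d + 1)).rank < (A ^ d).rank := by
      intro d
      refine lt_of_le_of_ne ?_ fun hc => h d hc.symm
      rw [pow_succ]
      exact Matrix.rank_mul_le_left _ _
    have key : ∀ d, (A ^ d).rank + d ≤ (A ^ 0).rank := by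
      intro d
      induction d with
      | zero => simp
      | succ d ih => have := hlt d; omega
    have := key ((A ^ 0).rank + 1)
    omega
  exact Nat.sInf_mem hne

lemma mrange_pow_succ : mrange (A ^ (matInd A + 1)) = mrange (A ^ matInd A) := by
  have hle : mrange (A ^ (matInd A + 1)) ≤ mrange (A ^ matInd A) := by
    rw [pow_succ]; exact mrange_mul_le _ _
  refine Submodule.eq_of_le_of_finrank_eq hle ?_
  rw [finrank_mrange, finrank_mrange, matInd_spec]

lemma mrange_pow_add : ∀ j, mrange (A ^ (matInd A + j)) = mrange (A ^ matInd A)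
  | 0 => rfl
  | (j + 1) => by
    have h1 : A ^ (matInd A + (j + 1)) = A * A ^ (matInd A + j) := by
      rw [← pow_succ']; ring_nf
    have h2 : A ^ (matInd A + 1) = A * A ^ matInd A := by rw [← pow_succ']
    rw [h1, mrange_mul, mrange_pow_add j, ← mrange_mul, ← h2, mrange_pow_succ]

lemma mapS {u : Fin nn → ℂ} (hu : u ∈ mrange (A ^ matInd A)) :
    A *ᵥ u ∈ mrange (A ^ matInd A) := by
  obtain ⟨v, hv⟩ := mem_mrange.mp hu
  have : A *ᵥ u ∈ mrange (A * A ^ matInd A) :=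
    mem_mrange.mpr ⟨v, by rw [← Matrix.mulVec_mulVec, hv]⟩
  rwa [← pow_succ', mrange_pow_succ] at this

lemma mapSpow (j : ℕ) {u : Fin nn → ℂ} (hu : u ∈ mrange (A ^ matInd A)) :
    A ^ j *ᵥ u ∈ mrange (A ^ matInd A) := by
  induction j with
  | zero => simpa using hu
  | succ j ih =>
    rw [pow_succ', ← Matrix.mulVec_mulVec]
    exact mapS A ih

lemma injS : ∀ u ∈ mrange (A ^ matInd A), ∀ v ∈ mrange (A ^ matInd A),
    A *ᵥ u = A *ᵥ v → u = v := by
  set S := mrange (A ^ matInd A) with hS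
  set f : S →ₗ[ℂ] (Fin nn → ℂ) := A.mulVecLin.comp S.subtype with hf
  have hrange : LinearMap.range f = mrange (A * A ^ matInd A) := by
    rw [hf, LinearMap.range_comp, Submodule.range_subtype, mrange_mul, hS, mrange]
  have hfr : Module.finrank ℂ (LinearMap.range f) = Module.finrank ℂ S := by
    rw [hrange]
    have : mrange (A * A ^ matInd A) = S := by
      rw [← pow_succ', hS, mrange_pow_succ]
    rw [this]
  have hker : LinearMap.ker f = ⊥ := by
    have := LinearMap.finrank_range_add_finrank_ker f
    rw [hfr] at this
    have h0 : Module.finrank ℂ (LinearMap.ker f) = 0 := by omega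
    exact Submodule.finrank_eq_zero.mp h0
  intro u hu v hv huv
  have : f ⟨u, hu⟩ = f ⟨v, hv⟩ := by
    simp only [hf, LinearMap.comp_apply, Submodule.subtype_apply, Matrix.mulVecLin_apply]
    exact huv
  have := (LinearMap.ker_eq_bot.mp hker) this
  exact congrArg Subtype.val this

lemma injSpow (j : ℕ) : ∀ u ∈ mrange (A ^ matInd A), ∀ v ∈ mrange (A ^ matInd A),
    A ^ j *ᵥ u = A ^ j *ᵥ v → u = v := by
  induction j with
  | zero => intro u _ v _ h; simpa using h
  | succ j ih =>
    intro u hu v hv h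
    rw [pow_succ', ← Matrix.mulVec_mulVec, ← Matrix.mulVec_mulVec] at h
    exact ih u hu v hv (injS A _ (mapSpow A j hu) _ (mapSpow A j hv) h)

/-- matrices equal if they act equally on all vectors -/
lemma ext_mulVec {M N : Matrix ι κ ℂ} [DecidableEq κ] (h : ∀ v, M *ᵥ v = N *ᵥ v) : M = N := by
  ext i j
  have := congrFun (h (Pi.single j 1)) i
  simpa using this

lemma star_dot_conjT (M : Matrix ι κ ℂ) (w : ι → ℂ) (t : κ → ℂ) :
    star (Mᴴ *ᵥ w) ⬝ᵥ t = star w ⬝ᵥ (M *ᵥ t) := by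
  rw [Matrix.star_mulVec, Matrix.conjTranspose_conjTranspose, ← Matrix.dotProduct_mulVec]

lemma sum_normsq_eq (u : ι → ℂ) : ∑ i, ‖u i‖ ^ 2 = (star u ⬝ᵥ u).re := by
  rw [dotProduct, Complex.re_sum]
  refine Finset.sum_congr rfl fun i _ => ?_
  simp [Complex.normSq_eq_norm_sq, ← Complex.normSq_eq_norm_sq, Complex.normSq_apply, Complex.mul_re,
    Complex.sq_norm]

lemma dot_star_comm (u v : ι → ℂ) : star u ⬝ᵥ v = star (star v ⬝ᵥ u) := by
  simp [dotProduct, Finset.sum_comm, mul_comm, map_sum]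

lemma pythagoras (e f : ι → ℂ) (h : star e ⬝ᵥ f = 0) :
    ∑ i, ‖(e + f) i‖ ^ 2 = (∑ i, ‖e i‖ ^ 2) + ∑ i, ‖f i‖ ^ 2 := by
  have hfe : star f ⬝ᵥ e = 0 := by rw [dot_star_comm, h]; simp
  rw [sum_normsq_eq, sum_normsq_eq, sum_normsq_eq]
  have : star (e + f) ⬝ᵥ (e + f) = star e ⬝ᵥ e + star f ⬝ᵥ f := by
    rw [star_add, add_dotProduct, dotProduct_add, dotProduct_add, h, hfe]
    ring
  rw [this, Complex.add_re]

lemma sum_normsq_nonneg (u : ι → ℂ) : 0 ≤ ∑ i, ‖u i‖ ^ 2 :=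
  Finset.sum_nonneg fun i _ => sq_nonneg _

lemma sum_normsq_pos {u : ι → ℂ} (hu : u ≠ 0) : 0 < ∑ i, ‖u i‖ ^ 2 := by
  refine lt_of_le_of_ne (sum_normsq_nonneg u) fun hc => hu ?_
  have := (Finset.sum_eq_zero_iff_of_nonneg (fun i _ => sq_nonneg ‖u i‖)).mp hc.symm
  funext i
  have := this i (Finset.mem_univ i)
  simpa [pow_eq_zero_iff] using this

lemma dot_self_eq_zero' {u : ι → ℂ} (h : star u ⬝ᵥ u = 0) : u = 0 := by
  by_contra hu
  have hp := sum_normsq_pos hu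
  rw [sum_normsq_eq, h] at hp
  simp at hp

end Aux


lemma col_mul {ι κ μ : Type*} [Fintype κ] (M : Matrix ι κ ℂ) (N : Matrix κ μ ℂ) (j : μ) :
    (fun i => (M * N) i j) = M *ᵥ (fun l => N l j) := by
  funext i
  simp [Matrix.mul_apply, Matrix.mulVec, dotProduct]

theorem stmt13 {n p : ℕ} (A : Matrix (Fin n) (Fin n) ℂ) (B : Matrix (Fin n) (Fin p) ℂ)
    (m : ℕ) (hm : 0 < m) (k : ℕ) (hk : k = matInd A)
    (Acep : Matrix (Fin n) (Fin n) ℂ) (hAcep : IsCoreEP A Acep)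
    (AWGm : Matrix (Fin n) (Fin n) ℂ) (hAWGm : AWGm = Acep ^ (m + 1) * A ^ m) :
    mrange (AWGm * B) ≤ mrange (A ^ k) ∧
      ∀ X : Matrix (Fin n) (Fin p) ℂ, mrange X ≤ mrange (A ^ k) → X ≠ AWGm * B →
        frobNorm (A ^ (m + 1) * (AWGm * B) - A ^ m * B) <
          frobNorm (A ^ (m + 1) * X - A ^ m * B) := by
  subst hk hAWGm
  obtain ⟨hY1, hY2, hY3⟩ := hAcep
  set Y := Acep with hYdef
  -- basic facts about Y and S
  have hYS : ∀ v, Y *ᵥ v ∈ mrange (A ^ matInd A) := by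
    intro v
    rw [← hY2]
    exact mem_mrange.mpr ⟨v, rfl⟩
  have hYt : ∀ t, Y *ᵥ t = 0 → ∀ s ∈ mrange (A ^ matInd A), star s ⬝ᵥ t = 0 := by
    intro t ht s hs
    rw [← hY3] at hs
    obtain ⟨w, hw⟩ := mem_mrange.mp hs
    rw [← hw, star_dot_conjT, ht]
    simp
  have hYAY : Y * (A * Y) = Y := by
    rw [← mul_assoc, hY1]
  have hYv0 : ∀ v, Y *ᵥ (v - (A * Y) *ᵥ v) = 0 := by
    intro v
    rw [Matrix.mulVec_sub, Matrix.mulVec_mulVec, hYAY, sub_self]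
  have hPmem : ∀ v, (A * Y) *ᵥ v ∈ mrange (A ^ matInd A) := by
    intro v
    rw [← Matrix.mulVec_mulVec]
    exact mapS A (hYS v)
  have hPid : ∀ u ∈ mrange (A ^ matInd A), (A * Y) *ᵥ u = u := by
    intro u hu
    have htS : u - (A * Y) *ᵥ u ∈ mrange (A ^ matInd A) := sub_mem hu (hPmem u)
    have h0 := hYt _ (hYv0 u) _ htS
    have := dot_self_eq_zero' h0
    exact (sub_eq_zero.mp this).symm
  have hAYY : A * Y * Y = Y := by
    apply ext_mulVec
    intro v
    rw [← Matrix.mulVec_mulVec]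
    exact hPid _ (hYS v)
  have hpow : ∀ j, A ^ (j + 1) * Y ^ (j + 1) = A * Y := by
    intro j
    induction j with
    | zero => rw [zero_add, pow_one, pow_one]
    | succ j ih =>
      have e1 : A ^ (j + 2) = A ^ (j + 1) * A := pow_succ A (j + 1)
      have e2 : Y ^ (j + 2) = Y * (Y * Y ^ j) := by
        rw [pow_succ' Y (j + 1), pow_succ' Y j]
      rw [e1, e2]
      have e3 : A ^ (j + 1) * A * (Y * (Y * Y ^ j)) = A ^ (j + 1) * (A * Y * Y) * Y ^ j := by
        simp only [mul_assoc]
      rw [e3, hAYY, mul_assoc, ← pow_succ', ih]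
  have hX0 : A ^ (m + 1) * (Y ^ (m + 1) * A ^ m * B) = (A * Y) * (A ^ m * B) := by
    calc A ^ (m + 1) * (Y ^ (m + 1) * A ^ m * B)
        = A ^ (m + 1) * Y ^ (m + 1) * (A ^ m * B) := by
          rw [Matrix.mul_assoc (Y ^ (m + 1)) (A ^ m) B, ← Matrix.mul_assoc]
      _ = (A * Y) * (A ^ m * B) := by rw [hpow m]
  -- first conjunct
  have hrange : mrange (Y ^ (m + 1) * A ^ m * B) ≤ mrange (A ^ matInd A) := by
    have h1 : mrange (Y ^ (m + 1) * A ^ m * B) ≤ mrange (Y ^ (m + 1)) :=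
      (mrange_mul_le (Y ^ (m + 1) * A ^ m) B).trans (mrange_mul_le (Y ^ (m + 1)) (A ^ m))
    have h2 : mrange (Y ^ (m + 1)) ≤ mrange Y := by
      rw [pow_succ']
      exact mrange_mul_le _ _
    rw [← hY2]
    exact h1.trans h2
  refine ⟨hrange, ?_⟩
  intro X hX hne
  -- column notation
  set X₀ := Y ^ (m + 1) * A ^ m * B with hX₀def
  have colX : ∀ j, (fun i => X i j) ∈ mrange (A ^ matInd A) := by
    intro j
    apply hX
    exact mem_mrange.mpr ⟨Pi.single j 1, by funext i; simp⟩
  have colX₀ : ∀ j, (fun i => X₀ i j) ∈ mrange (A ^ matInd A) := by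
    intro j
    apply hrange
    exact mem_mrange.mpr ⟨Pi.single j 1, by funext i; simp⟩
  set b : Fin p → Fin n → ℂ := fun j => (fun i => (A ^ m * B) i j) with hb
  set q : Fin p → Fin n → ℂ := fun j => (A * Y) *ᵥ (b j) with hq
  -- column of the X₀ residual
  have hcol0 : ∀ j, (fun i => (A ^ (m + 1) * X₀ - A ^ m * B) i j) = q j - b j := by
    intro j
    funext i
    have : (fun i => (A ^ (m + 1) * X₀) i j) = q j := by
      rw [hX₀def, hX0, col_mul]
    simp only [Matrix.sub_apply, Pi.sub_apply]
    rw [← congrFun this i]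
  have hcolq : ∀ j, A ^ (m + 1) *ᵥ (fun i => X₀ i j) = q j := by
    intro j
    rw [← col_mul]
    have : (fun i => (A ^ (m + 1) * X₀) i j) = q j := by
      rw [hX₀def, hX0, col_mul]
    exact this
  -- column of the X residual
  have hcolX : ∀ j, (fun i => (A ^ (m + 1) * X - A ^ m * B) i j) =
      (A ^ (m + 1) *ᵥ (fun i => X i j) - q j) + (q j - b j) := by
    intro j
    funext i
    simp only [Matrix.sub_apply, Pi.add_apply, Pi.sub_apply]
    rw [← congrFun (col_mul (A ^ (m + 1)) X j) i]
    ring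
  -- orthogonality data
  have hfker : ∀ j, Y *ᵥ (q j - b j) = 0 := by
    intro j
    have : q j - b j = -(b j - (A * Y) *ᵥ (b j)) := by rw [hq]; ring
    rw [this, Matrix.mulVec_neg, hYv0, neg_zero]
  have heS : ∀ j, A ^ (m + 1) *ᵥ (fun i => X i j) - q j ∈ mrange (A ^ matInd A) :=
    fun j => sub_mem (mapSpow A (m + 1) (colX j)) (hPmem _)
  have hortho : ∀ j, star (A ^ (m + 1) *ᵥ (fun i => X i j) - q j) ⬝ᵥ (q j - b j) = 0 :=
    fun j => hYt _ (hfker j) _ (heS j)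
  -- sum comparison
  have hsum : (∑ i, ∑ j, ‖(A ^ (m + 1) * X₀ - A ^ m * B) i j‖ ^ 2) <
      ∑ i, ∑ j, ‖(A ^ (m + 1) * X - A ^ m * B) i j‖ ^ 2 := by
    rw [Finset.sum_comm, Finset.sum_comm (γ := Fin n)]
    have hterm : ∀ j, (∑ i, ‖(A ^ (m + 1) * X - A ^ m * B) i j‖ ^ 2) =
        (∑ i, ‖(A ^ (m + 1) *ᵥ (fun i => X i j) - q j) i‖ ^ 2) +
          ∑ i, ‖(q j - b j) i‖ ^ 2 := by
      intro j
      have := pythagoras _ _ (hortho j)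
      rw [← this]
      refine Finset.sum_congr rfl fun i _ => ?_
      rw [← congrFun (hcolX j) i]
    have hterm0 : ∀ j, (∑ i, ‖(A ^ (m + 1) * X₀ - A ^ m * B) i j‖ ^ 2) =
        ∑ i, ‖(q j - b j) i‖ ^ 2 := by
      intro j
      refine Finset.sum_congr rfl fun i _ => ?_
      rw [← congrFun (hcol0 j) i]
    obtain ⟨j₀, hj₀⟩ : ∃ j, (fun i => X i j) ≠ (fun i => X₀ i j) := by
      by_contra hc
      push_neg at hc
      exact hne (by ext i j; exact congrFun (hc j) i)
    have hej : A ^ (m + 1) *ᵥ (fun i => X i j₀) - q j₀ ≠ 0 := by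
      intro h0
      apply hj₀
      have h1 : A ^ (m + 1) *ᵥ (fun i => X i j₀) = A ^ (m + 1) *ᵥ (fun i => X₀ i j₀) := by
        rw [hcolq j₀]
        exact sub_eq_zero.mp h0
      exact injSpow A (m + 1) _ (colX j₀) _ (colX₀ j₀) h1
    refine Finset.sum_lt_sum (fun j _ => ?_) ⟨j₀, Finset.mem_univ j₀, ?_⟩
    · rw [hterm j, hterm0 j]
      exact le_add_of_nonneg_left (sum_normsq_nonneg _)
    · rw [hterm j₀, hterm0 j₀]
      have := sum_normsq_pos hej
      linarith
  rw [frobNorm, frobNorm]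
  exact Real.sqrt_lt_sqrt
    (Finset.sum_nonneg fun i _ => Finset.sum_nonneg fun j _ => sq_nonneg _) hsum
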